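/- Let (X,d) be a metric space that is not discrete, i.e., contains an accumulation point x. Then the reach of x for the isometric embedding of X into its 1-Wasserstein space W_1(X) via Dirac deltas is zero: reach(δ_x, {δ_z : z ∈ X} ⊆ W_1(X)) = 0. Concretely, for every ε > 0 there exists a probability measure μ on X with W_1(δ_x, μ) < ε such that μ has at least two distinct nearest points among the Dirac measures {δ_z : z ∈ X}. -/

import Mathlib

/-!
Put `μ = (δ_x + δ_y) / 2` for a point `y ≠ x` close to `x`. Since the only coupling of `μ` with a
Dirac mass `δ_z` is the product, `W₁(μ, δ_z) = (d(x, z) + d(y, z)) / 2`, which by the triangle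
inequality is at least `d(x, y) / 2`, with equality at both `z = x` and `z = y`. So `μ` has the two
nearest Dirac masses `δ_x ≠ δ_y`, while `W₁(δ_x, μ) = d(x, y) / 2` is arbitrarily small.
-/

open MeasureTheory ENNReal Set

noncomputable section

/-- The set of couplings (transference plans) between two measures. -/
def Couplings {X : Type*} [MeasurableSpace X] (μ ν : Measure X) :
    Set (Measure (X × X)) :=
  {π | π.map Prod.fst = μ ∧ π.map Prod.snd = ν}

/-- The `p`-Wasserstein (extended) distance between two measures. -/
def Wp {X : Type*} [PseudoEMetricSpace X] [MeasurableSpace X] (p : ℝ)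
    (μ ν : Measure X) : ℝ≥0∞ :=
  (⨅ π ∈ Couplings μ ν, ∫⁻ z, edist z.1 z.2 ^ p ∂π) ^ (1 / p)

/-- The `p`-Wasserstein space: probability measures with finite `p`-th moment. -/
def WSpace (X : Type*) [PseudoEMetricSpace X] [MeasurableSpace X] (p : ℝ) :
    Set (Measure X) :=
  {μ | IsProbabilityMeasure μ ∧ ∃ x₀ : X, ∫⁻ x, edist x x₀ ^ p ∂μ ≠ ⊤}

/-- The image of `X` in its Wasserstein space: the set of Dirac measures. -/
def Diracs (X : Type*) [MeasurableSpace X] : Set (Measure X) :=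
  Set.range (Measure.dirac : X → Measure X)

/-- Distance from a point to a set, with respect to a distance function `ρ`. -/
def distToSet {Y : Type*} (ρ : Y → Y → ℝ≥0∞) (y : Y) (A : Set Y) : ℝ≥0∞ :=
  ⨅ a ∈ A, ρ y a

/-- `y` has a unique metric projection onto `A`. -/
def HasUniqueProj {Y : Type*} (ρ : Y → Y → ℝ≥0∞) (A : Set Y) (y : Y) : Prop :=
  ∃! a, a ∈ A ∧ ρ y a = distToSet ρ y A

/-- The reach of `A` at `a ∈ A`, within the ambient set `S`: the supremum of radii `r`
such that every point of the ball `B_r(a) ∩ S` has a unique metric projection onto `A`. -/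
def reachAt {Y : Type*} (ρ : Y → Y → ℝ≥0∞) (S A : Set Y) (a : Y) : ℝ≥0∞ :=
  sSup {r : ℝ≥0∞ | ∀ y ∈ S, ρ a y < r → HasUniqueProj ρ A y}

/-- The global reach of `A` within the ambient set `S`. -/
def globalReach {Y : Type*} (ρ : Y → Y → ℝ≥0∞) (S A : Set Y) : ℝ≥0∞ :=
  ⨅ a ∈ A, reachAt ρ S A a

/-- A minimizing geodesic from `x` to `y`, parametrized proportionally on `[0,1]`. -/
def IsMinGeodesic {X : Type*} [PseudoMetricSpace X] (γ : ℝ → X) (x y : X) : Prop :=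
  γ 0 = x ∧ γ 1 = y ∧
    ∀ s ∈ Set.Icc (0:ℝ) 1, ∀ t ∈ Set.Icc (0:ℝ) 1, dist (γ s) (γ t) = |s - t| * dist x y

/-- A geodesic metric space: any two points are joined by a minimizing geodesic. -/
def IsGeodesicSpace (X : Type*) [PseudoMetricSpace X] : Prop :=
  ∀ x y : X, ∃ γ : ℝ → X, IsMinGeodesic γ x y

/-- `a` lies on some minimizing geodesic from `x` to `y`. -/
def OnMinGeodesic {X : Type*} [PseudoMetricSpace X] (a x y : X) : Prop :=
  ∃ γ : ℝ → X, ∃ t ∈ Set.Icc (0:ℝ) 1, IsMinGeodesic γ x y ∧ γ t = a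

section Wasserstein

variable {X : Type*} [MeasurableSpace X]

lemma map_swap_mem_couplings {μ ν : Measure X} {π : Measure (X × X)}
    (hπ : π ∈ Couplings μ ν) : π.map Prod.swap ∈ Couplings ν μ := by
  obtain ⟨h₁, h₂⟩ := hπ
  refine ⟨?_, ?_⟩
  · rw [Measure.map_map measurable_fst measurable_swap]; exact h₂
  · rw [Measure.map_map measurable_snd measurable_swap]; exact h₁

lemma prod_dirac_mem_couplings (μ : Measure X) [IsProbabilityMeasure μ] (z : X) :
    μ.prod (Measure.dirac z) ∈ Couplings μ (Measure.dirac z) := by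
  constructor <;> simp [Measure.map_fst_prod, Measure.map_snd_prod]

lemma ae_snd_eq_of_mem_couplings_dirac [MeasurableSingletonClass X] {μ : Measure X} {z : X}
    {π : Measure (X × X)} (hπ : π ∈ Couplings μ (Measure.dirac z)) : ∀ᵐ q ∂π, q.2 = z := by
  have hz : ∀ᵐ w ∂π.map Prod.snd, w = z := by
    rw [hπ.2]; exact (ae_dirac_iff (measurableSet_singleton z)).mpr rfl
  exact ae_of_ae_map measurable_snd.aemeasurable hz

def diracMidpoint (x y : X) : Measure X := (2⁻¹ : ℝ≥0∞) • (Measure.dirac x + Measure.dirac y)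

variable (x y : X)

instance : IsProbabilityMeasure (diracMidpoint x y) :=
  ⟨by simp [diracMidpoint, ENNReal.inv_two_add_inv_two]⟩

lemma diracMidpoint_comm : diracMidpoint x y = diracMidpoint y x := by
  rw [diracMidpoint, add_comm, diracMidpoint]

lemma lintegral_diracMidpoint {f : X → ℝ≥0∞} (hf : Measurable f) :
    ∫⁻ w, f w ∂diracMidpoint x y = 2⁻¹ * (f x + f y) := by
  simp [diracMidpoint, lintegral_add_measure, lintegral_dirac' _ hf, mul_add]

variable [PseudoEMetricSpace X]

lemma Wp_comm (p : ℝ) (μ ν : Measure X) : Wp p μ ν = Wp p ν μ := by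
  suffices h : ∀ μ ν : Measure X, (⨅ π ∈ Couplings μ ν, ∫⁻ q, edist q.1 q.2 ^ p ∂π) ≤
      ⨅ π ∈ Couplings ν μ, ∫⁻ q, edist q.1 q.2 ^ p ∂π by
    rw [Wp, Wp, le_antisymm (h μ ν) (h ν μ)]
  intro μ ν
  refine le_iInf₂ fun π hπ => iInf₂_le_of_le _ (map_swap_mem_couplings hπ) ?_
  refine (lintegral_map_equiv _ (MeasurableEquiv.prodComm (α := X) (β := X))).trans_le ?_
  simp [MeasurableEquiv.prodComm, edist_comm]

variable [OpensMeasurableSpace X]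

lemma diracMidpoint_mem_WSpace (hxy : edist x y ≠ ⊤) : diracMidpoint x y ∈ WSpace X 1 := by
  refine ⟨inferInstance, x, ?_⟩
  simp only [ENNReal.rpow_one, lintegral_diracMidpoint x y measurable_edist_left]
  simp [edist_comm, ENNReal.mul_eq_top, hxy]

variable [MeasurableSingletonClass X]

lemma Wp_dirac_right (p : ℝ) (μ : Measure X) [IsProbabilityMeasure μ] (z : X) :
    Wp p μ (Measure.dirac z) = (∫⁻ w, edist w z ^ p ∂μ) ^ (1 / p) := by
  have hf : Measurable fun w => edist w z ^ p := measurable_edist_left.pow_const p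
  have cost_eq : ∀ π ∈ Couplings μ (Measure.dirac z),
      ∫⁻ q, edist q.1 q.2 ^ p ∂π = ∫⁻ w, edist w z ^ p ∂μ := fun π hπ => calc
    ∫⁻ q, edist q.1 q.2 ^ p ∂π = ∫⁻ q, edist q.1 z ^ p ∂π :=
      lintegral_congr_ae <| (ae_snd_eq_of_mem_couplings_dirac hπ).mono fun q hq => by simp only [hq]
    _ = ∫⁻ w, edist w z ^ p ∂π.map Prod.fst := (lintegral_map hf measurable_fst).symm
    _ = ∫⁻ w, edist w z ^ p ∂μ := by rw [hπ.1]
  rw [Wp, biInf_congr cost_eq, biInf_const ⟨_, prod_dirac_mem_couplings μ z⟩]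

lemma Wp_one_diracMidpoint_dirac (z : X) :
    Wp 1 (diracMidpoint x y) (Measure.dirac z) = 2⁻¹ * (edist x z + edist y z) := by
  simpa [Wp_dirac_right] using lintegral_diracMidpoint x y measurable_edist_left

lemma distToSet_diracMidpoint_Diracs :
    distToSet (Wp 1) (diracMidpoint x y) (Diracs X) = 2⁻¹ * edist x y := by
  simp only [distToSet, Diracs, iInf_range, Wp_one_diracMidpoint_dirac]
  refine le_antisymm (iInf_le_of_le x (by simp [edist_comm])) (le_iInf fun z => ?_)
  gcongr
  exact (edist_triangle x z y).trans_eq (by rw [edist_comm z y])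

lemma Wp_one_diracMidpoint_dirac_left :
    Wp 1 (diracMidpoint x y) (Measure.dirac x) =
      distToSet (Wp 1) (diracMidpoint x y) (Diracs X) := by
  simp [Wp_one_diracMidpoint_dirac, distToSet_diracMidpoint_Diracs, edist_comm]

lemma Wp_one_dirac_diracMidpoint :
    Wp 1 (Measure.dirac x) (diracMidpoint x y) = 2⁻¹ * edist x y := by
  simp [Wp_comm, Wp_one_diracMidpoint_dirac, edist_comm]

end Wasserstein

lemma exists_ne_edist_lt {X : Type*} [PseudoMetricSpace X] {x : X}
    (hx : ∀ ε : ℝ, 0 < ε → ∃ y : X, y ≠ x ∧ dist x y < ε) {ε : ℝ≥0∞} (hε : 0 < ε) :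
    ∃ y, y ≠ x ∧ edist x y < ε := by
  obtain ⟨r, -, hr, hrε⟩ := ENNReal.lt_iff_exists_real_btwn.mp hε
  obtain ⟨y, hyx, hxy⟩ := hx r (ENNReal.ofReal_pos.mp hr)
  exact ⟨y, hyx, (edist_lt_ofReal.mpr hxy).trans hrε⟩

lemma exists_mem_WSpace_two_nearest_Diracs {X : Type*} [PseudoMetricSpace X] [MeasurableSpace X]
    [OpensMeasurableSpace X] [MeasurableSingletonClass X]
    {x : X} (hx : ∀ ε : ℝ, 0 < ε → ∃ y : X, y ≠ x ∧ dist x y < ε) :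
    ∀ ε : ℝ≥0∞, 0 < ε → ∃ μ ∈ WSpace X 1,
      Wp 1 (Measure.dirac x) μ < ε ∧
      ∃ ν₁ ∈ Diracs X, ∃ ν₂ ∈ Diracs X, ν₁ ≠ ν₂ ∧
        Wp 1 μ ν₁ = distToSet (Wp 1) μ (Diracs X) ∧
        Wp 1 μ ν₂ = distToSet (Wp 1) μ (Diracs X) := by
  intro ε hε
  obtain ⟨y, hyx, hxy⟩ := exists_ne_edist_lt hx hε
  refine ⟨diracMidpoint x y, diracMidpoint_mem_WSpace x y (edist_ne_top x y), ?_,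
    _, mem_range_self x, _, mem_range_self y, dirac_ne_dirac hyx.symm,
    Wp_one_diracMidpoint_dirac_left x y, ?_⟩
  · rw [Wp_one_dirac_diracMidpoint, ← ENNReal.div_eq_inv_mul]
    exact ENNReal.half_le_self.trans_lt hxy
  · rw [diracMidpoint_comm]
    exact Wp_one_diracMidpoint_dirac_left y x

section Reach

variable {Y : Type*} {ρ : Y → Y → ℝ≥0∞} {S A : Set Y}

lemma not_hasUniqueProj_of_ne {y a₁ a₂ : Y} (h₁ : a₁ ∈ A) (h₂ : a₂ ∈ A) (hne : a₁ ≠ a₂)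
    (hd₁ : ρ y a₁ = distToSet ρ y A) (hd₂ : ρ y a₂ = distToSet ρ y A) :
    ¬HasUniqueProj ρ A y := fun ⟨_, _, hu⟩ => hne ((hu a₁ ⟨h₁, hd₁⟩).trans (hu a₂ ⟨h₂, hd₂⟩).symm)

lemma reachAt_eq_zero_of_forall_not_hasUniqueProj {a : Y}
    (h : ∀ ε, 0 < ε → ∃ y ∈ S, ρ a y < ε ∧ ¬HasUniqueProj ρ A y) : reachAt ρ S A a = 0 := by
  refine nonpos_iff_eq_zero.mp (sSup_le fun r hr => not_lt.mp fun hr₀ => ?_)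
  obtain ⟨y, hyS, hyr, hy⟩ := h r hr₀
  exact hy (hr y hyS hyr)

lemma reachAt_eq_zero_of_forall_two_nearest {a : Y}
    (h : ∀ ε, 0 < ε → ∃ y ∈ S, ρ a y < ε ∧ ∃ a₁ ∈ A, ∃ a₂ ∈ A, a₁ ≠ a₂ ∧
      ρ y a₁ = distToSet ρ y A ∧ ρ y a₂ = distToSet ρ y A) :
    reachAt ρ S A a = 0 :=
  reachAt_eq_zero_of_forall_not_hasUniqueProj fun ε hε =>
    let ⟨y, hyS, hya, _, h₁, _, h₂, hne, hd₁, hd₂⟩ := h ε hε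
    ⟨y, hyS, hya, not_hasUniqueProj_of_ne h₁ h₂ hne hd₁ hd₂⟩

end Reach

theorem reach_zero_in_W1 {X : Type*} [MetricSpace X] [MeasurableSpace X] [BorelSpace X]
    (x : X) (hx : ∀ ε : ℝ, 0 < ε → ∃ y : X, y ≠ x ∧ dist x y < ε) :
    reachAt (Wp 1) (WSpace X 1) (Diracs X) (Measure.dirac x) = 0 ∧
    ∀ ε : ℝ≥0∞, 0 < ε → ∃ μ ∈ WSpace X 1,
      Wp 1 (Measure.dirac x) μ < ε ∧
      ∃ ν₁ ∈ Diracs X, ∃ ν₂ ∈ Diracs X, ν₁ ≠ ν₂ ∧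
        Wp 1 μ ν₁ = distToSet (Wp 1) μ (Diracs X) ∧
        Wp 1 μ ν₂ = distToSet (Wp 1) μ (Diracs X) := by
  have two_nearest := exists_mem_WSpace_two_nearest_Diracs hx
  exact ⟨reachAt_eq_zero_of_forall_two_nearest two_nearest, two_nearest⟩
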